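/- Let ⊢ denote derivability in the calculus obtained from GB by adding Identity and Limited Cut. Then every instance of Cut is derivable: for all finite multisets of formulas Γ, Γ', Δ, Δ' and every formula φ, {Γ▷Δ,φ ; φ,Γ'▷Δ'} ⊢ Γ,Γ' ▷ Δ,Δ'. -/

import Mathlib

/-- Propositional formulas: atoms, conjunction, disjunction, De Morgan negation, ⊤, ⊥. -/
inductive Fm : Type where
  | atom : ℕ → Fm
  | conj : Fm → Fm → Fm
  | disj : Fm → Fm → Fm
  | neg  : Fm → Fm
  | top  : Fm
  | bot  : Fm
deriving DecidableEq

/-- A sequent is a pair of finite multisets of formulas. -/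
abbrev Sqnt : Type := Multiset Fm × Multiset Fm

/-- A formula is an atom. -/
def isAtom (φ : Fm) : Prop := ∃ i, φ = Fm.atom i

/-- A sequent is atomic if every formula in it is an atom. -/
def AtomicSeq (s : Sqnt) : Prop := (∀ φ ∈ s.1, isAtom φ) ∧ (∀ φ ∈ s.2, isAtom φ)

/-- Derivability of a sequent from a set `S` of sequents in a super-Belnap calculus.
The calculus always contains the common structural rules of Weakening and Contraction.
The `Prop` flags switch further rules on and off:
`i` = the introduction rules (incl. the axioms `∅▷⊤` and `⊥▷∅`),
`e` = the elimination rules, `d` = Identity, `c` = Cut, `l` = Limited Cut. -/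
inductive Drv (i e d c l : Prop) (S : Set Sqnt) : Sqnt → Prop where
  | prem {s} : s ∈ S → Drv i e d c l S s
  -- common structural rules: Weakening and Contraction
  | wkL (φ : Fm) {Γ Δ} : Drv i e d c l S (Γ, Δ) → Drv i e d c l S (φ ::ₘ Γ, Δ)
  | wkR (φ : Fm) {Γ Δ} : Drv i e d c l S (Γ, Δ) → Drv i e d c l S (Γ, φ ::ₘ Δ)
  | ctrL {φ Γ Δ} : Drv i e d c l S (φ ::ₘ φ ::ₘ Γ, Δ) → Drv i e d c l S (φ ::ₘ Γ, Δ)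
  | ctrR {φ Γ Δ} : Drv i e d c l S (Γ, φ ::ₘ φ ::ₘ Δ) → Drv i e d c l S (Γ, φ ::ₘ Δ)
  -- introduction rules
  | andR {φ ψ Γ Δ} : i → Drv i e d c l S (Γ, φ ::ₘ Δ) → Drv i e d c l S (Γ, ψ ::ₘ Δ) →
      Drv i e d c l S (Γ, Fm.conj φ ψ ::ₘ Δ)
  | andL {φ ψ Γ Δ} : i → Drv i e d c l S (φ ::ₘ ψ ::ₘ Γ, Δ) →
      Drv i e d c l S (Fm.conj φ ψ ::ₘ Γ, Δ)
  | orL {φ ψ Γ Δ} : i → Drv i e d c l S (φ ::ₘ Γ, Δ) → Drv i e d c l S (ψ ::ₘ Γ, Δ) →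
      Drv i e d c l S (Fm.disj φ ψ ::ₘ Γ, Δ)
  | orR {φ ψ Γ Δ} : i → Drv i e d c l S (Γ, φ ::ₘ ψ ::ₘ Δ) →
      Drv i e d c l S (Γ, Fm.disj φ ψ ::ₘ Δ)
  | negR {φ Γ Δ} : i → Drv i e d c l S (φ ::ₘ Γ, Δ) → Drv i e d c l S (Γ, Fm.neg φ ::ₘ Δ)
  | negL {φ Γ Δ} : i → Drv i e d c l S (Γ, φ ::ₘ Δ) → Drv i e d c l S (Fm.neg φ ::ₘ Γ, Δ)
  | topR : i → Drv i e d c l S (0, {Fm.top})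
  | botL : i → Drv i e d c l S ({Fm.bot}, 0)
  -- elimination rules
  | andRE1 {φ ψ Γ Δ} : e → Drv i e d c l S (Γ, Fm.conj φ ψ ::ₘ Δ) → Drv i e d c l S (Γ, φ ::ₘ Δ)
  | andRE2 {φ ψ Γ Δ} : e → Drv i e d c l S (Γ, Fm.conj φ ψ ::ₘ Δ) → Drv i e d c l S (Γ, ψ ::ₘ Δ)
  | andLE {φ ψ Γ Δ} : e → Drv i e d c l S (Fm.conj φ ψ ::ₘ Γ, Δ) →
      Drv i e d c l S (φ ::ₘ ψ ::ₘ Γ, Δ)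
  | orLE1 {φ ψ Γ Δ} : e → Drv i e d c l S (Fm.disj φ ψ ::ₘ Γ, Δ) → Drv i e d c l S (φ ::ₘ Γ, Δ)
  | orLE2 {φ ψ Γ Δ} : e → Drv i e d c l S (Fm.disj φ ψ ::ₘ Γ, Δ) → Drv i e d c l S (ψ ::ₘ Γ, Δ)
  | orRE {φ ψ Γ Δ} : e → Drv i e d c l S (Γ, Fm.disj φ ψ ::ₘ Δ) →
      Drv i e d c l S (Γ, φ ::ₘ ψ ::ₘ Δ)
  | negRE {φ Γ Δ} : e → Drv i e d c l S (Γ, Fm.neg φ ::ₘ Δ) → Drv i e d c l S (φ ::ₘ Γ, Δ)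
  | negLE {φ Γ Δ} : e → Drv i e d c l S (Fm.neg φ ::ₘ Γ, Δ) → Drv i e d c l S (Γ, φ ::ₘ Δ)
  | topLE {Γ Δ} : e → Drv i e d c l S (Fm.top ::ₘ Γ, Δ) → Drv i e d c l S (Γ, Δ)
  | botRE {Γ Δ} : e → Drv i e d c l S (Γ, Fm.bot ::ₘ Δ) → Drv i e d c l S (Γ, Δ)
  -- Identity
  | ident (φ : Fm) : d → Drv i e d c l S ({φ}, {φ})
  -- Cut
  | cut {φ Γ Γ' Δ Δ'} : c → Drv i e d c l S (Γ, φ ::ₘ Δ) → Drv i e d c l S (φ ::ₘ Γ', Δ') →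
      Drv i e d c l S (Γ + Γ', Δ + Δ')
  -- Limited Cut
  | lcut1 {φ Γ Δ} : l → Drv i e d c l S (0, {φ}) → Drv i e d c l S (φ ::ₘ Γ, Δ) →
      Drv i e d c l S (Γ, Δ)
  | lcut2 {φ Γ Δ} : l → Drv i e d c l S (Γ, φ ::ₘ Δ) → Drv i e d c l S ({φ}, 0) →
      Drv i e d c l S (Γ, Δ)

/-!
`Fm.sequentFormula Γ Δ = ⋁Δ ∨ ⋁−Γ` internalises the sequent `Γ ▷ Δ`: moving `Γ` to the right
as negations and folding the right side into a disjunction turns `Γ ▷ Δ, Θ` into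
`∅ ▷ sequentFormula Γ Δ, Θ`, and conversely `sequentFormula Γ Δ, Γ ▷ Δ` holds by Identity on
each disjunct. For `χ = φ ∨ sequentFormula Γ Δ` the first premise gives `∅ ▷ χ`, while
`χ, Γ, Γ' ▷ Δ, Δ'` follows from the second premise on the disjunct `φ` and from
`sequentFormula Γ Δ, Γ ▷ Δ` on the other; a Limited Cut on `χ` finishes.
-/

namespace Fm

def bigDisj (l : List Fm) : Fm := l.foldr Fm.disj Fm.bot

noncomputable def sequentFormula (Γ Δ : Multiset Fm) : Fm := bigDisj (Δ + Γ.map Fm.neg).toList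

end Fm

namespace Drv

variable {i e d c l : Prop} {S : Set Sqnt}

theorem weaken_add {Γ Δ : Multiset Fm} (A B : Multiset Fm) (h : Drv i e d c l S (Γ, Δ)) :
    Drv i e d c l S (Γ + A, Δ + B) := by
  induction A using Multiset.induction with
  | empty =>
    induction B using Multiset.induction with
    | empty => simpa using h
    | cons b B ih => rw [Multiset.add_cons]; exact wkR b ih
  | cons a A ih => rw [Multiset.add_cons]; exact wkL a ih

theorem weaken {Γ Γ' Δ Δ' : Multiset Fm} (h : Drv i e d c l S (Γ, Δ)) (hΓ : Γ ≤ Γ')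
    (hΔ : Δ ≤ Δ') : Drv i e d c l S (Γ', Δ') := by
  obtain ⟨A, rfl⟩ := Multiset.le_iff_exists_add.mp hΓ
  obtain ⟨B, rfl⟩ := Multiset.le_iff_exists_add.mp hΔ
  exact h.weaken_add A B

theorem negR_map (hi : i) (Γ₀ : Multiset Fm) {Γ Δ : Multiset Fm}
    (h : Drv i e d c l S (Γ₀ + Γ, Δ)) : Drv i e d c l S (Γ, Γ₀.map Fm.neg + Δ) := by
  induction Γ₀ using Multiset.induction generalizing Δ with
  | empty => simpa using h
  | cons γ Γ₀ ih =>
    rw [Multiset.map_cons, Multiset.cons_add, ← Multiset.add_cons]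
    exact ih (negR hi (by rwa [← Multiset.cons_add]))

theorem bigDisjR (hi : i) (ls : List Fm) {Γ Δ : Multiset Fm}
    (h : Drv i e d c l S (Γ, ↑ls + Δ)) : Drv i e d c l S (Γ, Fm.bigDisj ls ::ₘ Δ) := by
  induction ls generalizing Δ with
  | nil => exact wkR _ (by simpa using h)
  | cons a ls ih =>
    refine orR hi ?_
    rw [Multiset.cons_swap]
    exact ih (by rwa [← Multiset.cons_coe, Multiset.cons_add, ← Multiset.add_cons] at h)

theorem bigDisjL (hi : i) (ls : List Fm) {Γ Δ : Multiset Fm}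
    (h : ∀ a ∈ ls, Drv i e d c l S (a ::ₘ Γ, Δ)) : Drv i e d c l S (Fm.bigDisj ls ::ₘ Γ, Δ) := by
  induction ls with
  | nil =>
    exact (botL hi).weaken (Multiset.cons_le_cons _ (Multiset.zero_le Γ)) (Multiset.zero_le Δ)
  | cons a ls ih =>
    exact orL hi (h a List.mem_cons_self) (ih fun b hb => h b (List.mem_cons_of_mem a hb))

theorem sequentFormula_right (hi : i) {Γ Δ Θ : Multiset Fm} (h : Drv i e d c l S (Γ, Δ + Θ)) :
    Drv i e d c l S (0, Fm.sequentFormula Γ Δ ::ₘ Θ) := by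
  refine bigDisjR hi _ ?_
  have h' := negR_map hi Γ (Γ := 0) (by rwa [add_zero])
  rwa [Multiset.coe_toList, add_comm Δ, add_assoc]

theorem sequentFormula_left (hi : i) (hd : d) (Γ Δ : Multiset Fm) :
    Drv i e d c l S (Fm.sequentFormula Γ Δ ::ₘ Γ, Δ) := by
  refine bigDisjL hi _ fun a ha => ?_
  rcases Multiset.mem_add.mp (Multiset.mem_toList.mp ha) with hδ | hnegγ
  · exact (ident a hd).weaken (Multiset.singleton_le.mpr (Multiset.mem_cons_self a Γ))
      (Multiset.singleton_le.mpr hδ)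
  · obtain ⟨γ, hγ, rfl⟩ := Multiset.mem_map.mp hnegγ
    exact (negL hi (ident γ hd)).weaken
      (Multiset.cons_le_cons _ (Multiset.singleton_le.mpr hγ)) (Multiset.zero_le Δ)

end Drv

/-- In the calculus obtained from GB by adding Identity and Limited Cut, every
instance of Cut is derivable from its premises. -/
theorem stmt3 (Γ Γ' Δ Δ' : Multiset Fm) (φ : Fm) :
    Drv True True True False True {(Γ, φ ::ₘ Δ), (φ ::ₘ Γ', Δ')} (Γ + Γ', Δ + Δ') := by
  set S : Set Sqnt := {(Γ, φ ::ₘ Δ), (φ ::ₘ Γ', Δ')}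
  have hprem₁ : Drv True True True False True S (Γ, Δ + {φ}) := by
    rw [add_comm, Multiset.singleton_add]; exact .prem (by simp [S])
  have hprem₂ : Drv True True True False True S (φ ::ₘ Γ', Δ') := .prem (by simp [S])
  set χ := Fm.disj φ (Fm.sequentFormula Γ Δ)
  have hχR : Drv True True True False True S (0, {χ}) := by
    refine .orR trivial ?_
    rw [Multiset.cons_swap]
    exact Drv.sequentFormula_right trivial hprem₁
  have hχL : Drv True True True False True S (χ ::ₘ (Γ + Γ'), Δ + Δ') :=
    .orL trivial
      (hprem₂.weaken (Multiset.cons_le_cons φ (Multiset.le_add_left Γ' Γ))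
        (Multiset.le_add_left Δ' Δ))
      ((Drv.sequentFormula_left trivial trivial Γ Δ).weaken
        (Multiset.cons_le_cons _ (Multiset.le_add_right Γ Γ')) (Multiset.le_add_right Δ Δ'))
  exact .lcut1 trivial hχR hχL
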